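/- arXiv:quant-ph/0407049 — 5 statements merged into one kernel-verified Lean document; each statement's English description precedes it below -/
import Mathlib

section
/- Let d_A ≤ d_B be positive integers. Then (1/ln 2)·(Σ_{j=d_B+1}^{d_A d_B} 1/j − (d_A−1)/(2 d_B)) > log₂ d_A − (1/(2 ln 2))·(d_A/d_B). -/
open scoped BigOperators ComplexOrder
open Matrix

noncomputable section

namespace QIT

variable {n : Type*} [Fintype n] [DecidableEq n]

/-- Density matrix of a pure state given by a unit vector. -/
def pureDM (φ : EuclideanSpace ℂ n) : Matrix n n ℂ :=
  Matrix.of fun i j => φ i * (starRingEnd ℂ) (φ j)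

/-- A density matrix: positive semidefinite with unit trace. -/
def DensityMatrix (ρ : Matrix n n ℂ) : Prop := ρ.PosSemidef ∧ ρ.trace = 1

/-- Von Neumann entropy (base 2), via the eigenvalues. -/
def vNEntropy (ρ : Matrix n n ℂ) : ℝ :=
  if h : ρ.IsHermitian then ∑ i, -(h.eigenvalues i * Real.logb 2 (h.eigenvalues i)) else 0

/-- Trace norm of a Hermitian matrix, via eigenvalues. -/
def traceNorm (M : Matrix n n ℂ) : ℝ :=
  if h : M.IsHermitian then ∑ i, |h.eigenvalues i| else 0

/-- Operator (spectral) norm. -/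
def opNorm (M : Matrix n n ℂ) : ℝ := ‖Matrix.toEuclideanCLM (𝕜 := ℂ) M‖

/-- Apply a real function to a Hermitian matrix via the spectral theorem. -/
def hermApply (f : ℝ → ℝ) (M : Matrix n n ℂ) : Matrix n n ℂ :=
  if h : M.IsHermitian then
    (h.eigenvectorUnitary : Matrix n n ℂ) * Matrix.diagonal (fun i => (f (h.eigenvalues i) : ℂ)) *
      (h.eigenvectorUnitary : Matrix n n ℂ)ᴴ
  else 0

/-- Matrix base-2 logarithm of a Hermitian matrix. -/
def mlog2 : Matrix n n ℂ → Matrix n n ℂ := hermApply (Real.logb 2)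

/-- Matrix square root of a positive semidefinite matrix. -/
def msqrt : Matrix n n ℂ → Matrix n n ℂ := hermApply Real.sqrt

/-- Quantum relative entropy `D(ρ‖σ) = Tr ρ (log₂ ρ − log₂ σ)`. -/
def relEnt (ρ σ : Matrix n n ℂ) : ℝ := ((ρ * (mlog2 ρ - mlog2 σ)).trace).re

/-- Uhlmann fidelity `F(ρ,σ) = (Tr √(√ρ σ √ρ))²`. -/
def fidelity (ρ σ : Matrix n n ℂ) : ℝ := (((msqrt (msqrt ρ * σ * msqrt ρ)).trace).re) ^ 2

/-- A projector. -/
def Projector (P : Matrix n n ℂ) : Prop := P.IsHermitian ∧ P * P = P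

variable {dA dB : ℕ}

/-- Partial trace over the second factor. -/
def ptraceB (ρ : Matrix (Fin dA × Fin dB) (Fin dA × Fin dB) ℂ) : Matrix (Fin dA) (Fin dA) ℂ :=
  Matrix.of fun a a' => ∑ b, ρ (a, b) (a', b)

/-- Partial trace over the first factor. -/
def ptraceA (ρ : Matrix (Fin dA × Fin dB) (Fin dA × Fin dB) ℂ) : Matrix (Fin dB) (Fin dB) ℂ :=
  Matrix.of fun b b' => ∑ a, ρ (a, b) (a, b')

/-- Kronecker (tensor) product of operators on the two factors. -/
def kron (P : Matrix (Fin dA) (Fin dA) ℂ) (Q : Matrix (Fin dB) (Fin dB) ℂ) :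
    Matrix (Fin dA × Fin dB) (Fin dA × Fin dB) ℂ :=
  Matrix.of fun x y => P x.1 y.1 * Q x.2 y.2

/-- Partial transpose on the second factor. -/
def ptransposeB (ρ : Matrix (Fin dA × Fin dB) (Fin dA × Fin dB) ℂ) :
    Matrix (Fin dA × Fin dB) (Fin dA × Fin dB) ℂ :=
  Matrix.of fun x y => ρ (x.1, y.2) (y.1, x.2)

/-- Bipartite separability. -/
def Separable (ρ : Matrix (Fin dA × Fin dB) (Fin dA × Fin dB) ℂ) : Prop :=
  ∃ (m : ℕ) (p : Fin m → ℝ) (a : Fin m → Matrix (Fin dA) (Fin dA) ℂ)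
    (b : Fin m → Matrix (Fin dB) (Fin dB) ℂ),
    (∀ l, 0 ≤ p l) ∧ (∑ l, p l = 1) ∧
    (∀ l, (a l).PosSemidef ∧ (a l).trace = 1) ∧
    (∀ l, (b l).PosSemidef ∧ (b l).trace = 1) ∧
    ρ = ∑ l, (p l : ℂ) • kron (a l) (b l)

/-- Entanglement of formation. -/
def EoF (ρ : Matrix (Fin dA × Fin dB) (Fin dA × Fin dB) ℂ) : ℝ :=
  sInf { x : ℝ | ∃ (m : ℕ) (p : Fin m → ℝ) (φ : Fin m → EuclideanSpace ℂ (Fin dA × Fin dB)),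
    (∀ l, 0 ≤ p l) ∧ (∑ l, p l = 1) ∧ (∀ l, ‖φ l‖ = 1) ∧
    (ρ = ∑ l, (p l : ℂ) • pureDM (φ l)) ∧
    x = ∑ l, p l * vNEntropy (ptraceB (pureDM (φ l))) }

end QIT

lemma log_lt_half' {u : ℝ} (hu : 1 < u) : Real.log u < (u - u⁻¹) / 2 := by
  have h0 : (0:ℝ) < u := by linarith
  have h1 : 0 < Real.log u := Real.log_pos hu
  have := (Real.self_lt_sinh_iff (x := Real.log u)).2 h1
  rwa [Real.sinh_log h0] at this

lemma trapezoid (m : ℕ) (hm : 1 ≤ m) :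
    Real.log (m+1) - Real.log m ≤ (1/(m:ℝ) + 1/((m:ℝ)+1)) / 2 := by
  have hm0 : (0:ℝ) < m := by exact_mod_cast hm
  have hu : (1:ℝ) < ((m:ℝ)+1)/m := by
    rw [lt_div_iff₀ hm0]; linarith
  have h := log_lt_half' hu
  rw [Real.log_div (by linarith) (by linarith)] at h
  have heq : ((((m:ℝ)+1)/m) - (((m:ℝ)+1)/m)⁻¹) / 2 = (1/(m:ℝ) + 1/((m:ℝ)+1)) / 2 := by
    rw [inv_div]; field_simp; ring
  rw [heq] at h
  linarith

lemma harmonic_lb (n : ℕ) (hn : 1 ≤ n) :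
    ∀ m, n ≤ m →
      Real.log m - Real.log n - 1/(2*(n:ℝ)) + 1/(2*(m:ℝ)) ≤
        ∑ j ∈ Finset.Icc (n+1) m, (1:ℝ)/j := by
  intro m hm
  induction m, hm using Nat.le_induction with
  | base => simp
  | succ m hm ih =>
    rw [Finset.sum_Icc_succ_top (by omega)]
    have hm1 : 1 ≤ m := le_trans hn hm
    have ht := trapezoid m hm1
    have hm0 : (0:ℝ) < m := by exact_mod_cast hm1
    have hc : ((m:ℕ)+1 : ℝ) = (m:ℝ)+1 := by push_cast; ring
    push_cast
    have : 1/(2*((m:ℝ)+1)) - 1/(2*(m:ℝ)) + (Real.log ((m:ℝ)+1) - Real.log m) ≤ 1/((m:ℝ)+1) := by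
      have e : 1/(2*((m:ℝ)+1)) - 1/(2*(m:ℝ)) + (1/(m:ℝ) + 1/((m:ℝ)+1))/2 = 1/((m:ℝ)+1) := by
        field_simp; ring
      linarith
    linarith


theorem page_entropy_lower_bound (dA dB : ℕ) (h1 : 1 ≤ dA) (h2 : dA ≤ dB) :
    (1 / Real.log 2) *
        ((∑ j ∈ Finset.Icc (dB + 1) (dA * dB), (1 : ℝ) / (j : ℝ)) - ((dA : ℝ) - 1) / (2 * dB))
      > Real.logb 2 dA - (1 / (2 * Real.log 2)) * ((dA : ℝ) / (dB : ℝ)) := by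

  have hdB : 1 ≤ dB := le_trans h1 h2
  have hdB0 : (0:ℝ) < dB := by exact_mod_cast hdB
  have hdA0 : (0:ℝ) < dA := by exact_mod_cast h1
  have hle : dB ≤ dA * dB := Nat.le_mul_of_pos_left dB h1
  have key := harmonic_lb dB hdB (dA * dB) hle
  have hmul : Real.log ((dA * dB : ℕ) : ℝ) = Real.log dA + Real.log dB := by
    push_cast
    exact Real.log_mul (ne_of_gt hdA0) (ne_of_gt hdB0)
  rw [hmul] at key
  have hm0 : (0:ℝ) < ((dA*dB : ℕ):ℝ) := by positivity
  have hS : Real.log dA - 1/(2*(dB:ℝ)) <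
      ∑ j ∈ Finset.Icc (dB + 1) (dA * dB), (1 : ℝ) / (j : ℝ) := by
    have : 0 < 1/(2*((dA*dB:ℕ):ℝ)) := by positivity
    linarith
  have hl2 : (0:ℝ) < Real.log 2 := Real.log_pos (by norm_num)
  rw [Real.logb, gt_iff_lt, ← sub_pos]
  have heq : (1 / Real.log 2) *
        ((∑ j ∈ Finset.Icc (dB + 1) (dA * dB), (1 : ℝ) / (j : ℝ)) - ((dA : ℝ) - 1) / (2 * dB)) -
      (Real.log dA / Real.log 2 - (1 / (2 * Real.log 2)) * ((dA : ℝ) / (dB : ℝ))) =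
      (1 / Real.log 2) *
        ((∑ j ∈ Finset.Icc (dB + 1) (dA * dB), (1 : ℝ) / (j : ℝ)) -
          (Real.log dA - 1/(2*(dB:ℝ)))) := by
    field_simp
    ring
  rw [heq]
  have := sub_pos.2 hS
  positivity

end
end

section
/- Let A = C^{d_A} with d_A ≥ 3 and B = C^{d_B}. Fix an orthonormal basis {e_j} of A. For a unit vector φ ∈ A ⊗ B, define p(j|φ) = ⟨e_j| Tr_B(|φ⟩⟨φ|) |e_j⟩ and g(φ) = −Σ_j p(j|φ) log₂ p(j|φ). Then g is Lipschitz with constant at most √8 · log₂ d_A with respect to the Euclidean (Hilbert-space) norm on unit vectors. -/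
open scoped BigOperators ComplexOrder
open Matrix

noncomputable section

/-- The measured entropy `g(φ) = −Σ_j p(j|φ) log₂ p(j|φ)` in the standard basis of `A`. -/
noncomputable def measuredEntropy (dA dB : ℕ) (φ : EuclideanSpace ℂ (Fin dA × Fin dB)) : ℝ :=
  ∑ j : Fin dA,
    -(((QIT.ptraceB (QIT.pureDM φ)) j j).re * Real.logb 2 ((QIT.ptraceB (QIT.pureDM φ)) j j).re)

/-!
Writing `φ_j ∈ ℂ^{d_B}` for the `j`-th block of `φ`, the measured probabilities are
`p(j|φ) = ‖φ_j‖²`, so `g(φ) = G(u)` with `G(u) = ∑ⱼ η(uⱼ²) / ln 2` and `uⱼ = ‖φ_j‖`; the map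
`φ ↦ u` is norm preserving and `1`-Lipschitz by the reverse triangle inequality in each block.
The function `u ↦ η(u²)` is differentiable on all of `ℝ` (also at `0`) with derivative
`-2u(1 + ln u²)`, so by the mean value theorem on a segment in the unit ball and Cauchy–Schwarz,
`G` is Lipschitz with constant `(2 / ln 2) · sup √(∑ⱼ xⱼ (1 + ln xⱼ)²)` over sub-probability
vectors `x`. For `x ∈ [0, 1]` and `L ≥ 1` one has `x (1 + ln x)² ≤ L² (x + e^{-L})`; with
`L = ln d_A`, which is `≥ 1` because `d_A ≥ 3 > e`, summing gives `∑ⱼ xⱼ (1 + ln xⱼ)² ≤ 2 L²`.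
-/

open Real Finset

lemma mul_one_add_log_sq_le {L x : ℝ} (hL : 1 ≤ L) (hx0 : 0 ≤ x) (hx1 : x ≤ 1) :
    x * (1 + log x) ^ 2 ≤ L ^ 2 * (x + exp (-L)) := by
  rcases hx0.eq_or_lt with rfl | hx
  · simp only [zero_mul, zero_add]
    positivity
  by_cases hmid : -L ≤ 1 + log x
  · have hlog : log x ≤ 0 := log_nonpos hx0 hx1
    have hsq : (1 + log x) ^ 2 ≤ L ^ 2 := sq_le_sq' hmid (by linarith)
    nlinarith [exp_pos (-L)]
  · push Not at hmid
    set u := -(log x + L) / 2 with hu_def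
    have hu : 0 ≤ u := by linarith
    -- `L e^u ≥ L (1 + u + u²/2) ≥ L - 1 + 2u = -(1 + log x)`
    have hlin : -(1 + log x) ≤ L * exp u := by
      nlinarith [quadratic_le_exp_of_nonneg hu, mul_nonneg (sub_nonneg.2 hL) hu,
        mul_nonneg (sub_nonneg.2 hL) (sq_nonneg u), sq_nonneg (u - 1)]
    have hsq : (1 + log x) ^ 2 ≤ L ^ 2 * exp (2 * u) := by
      rw [show (2 : ℝ) * u = u + u by ring, exp_add]
      nlinarith
    have hcancel : x * exp (2 * u) = exp (-L) := by
      rw [show 2 * u = -log x + -L by ring, exp_add, exp_neg (log x), exp_log hx]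
      field_simp
    calc x * (1 + log x) ^ 2 ≤ L ^ 2 * (x * exp (2 * u)) := by nlinarith
      _ ≤ L ^ 2 * (x + exp (-L)) := by rw [hcancel]; nlinarith

lemma hasDerivAt_negMulLog_sq (u : ℝ) :
    HasDerivAt (fun u => negMulLog (u ^ 2)) (-2 * u * (1 + log (u ^ 2))) u := by
  have hne : ∀ v ≠ (0 : ℝ),
      HasDerivAt (fun u => negMulLog (u ^ 2)) (-2 * v * (1 + log (v ^ 2))) v := fun v hv => by
    have hsq : HasDerivAt (fun u : ℝ => u ^ 2) (2 * v) v := by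
      simpa using hasDerivAt_pow 2 v
    exact ((hasDerivAt_negMulLog (pow_ne_zero 2 hv)).comp (h := fun u : ℝ => u ^ 2) v
      hsq).congr_deriv (by ring)
  rcases eq_or_ne u 0 with rfl | hu
  · refine hasDerivAt_of_hasDerivAt_of_ne hne (by fun_prop) ?_
    -- `u log u² = 2 u log u` is continuous at `0` even though `log` is not
    have : (fun v : ℝ => -2 * v * (1 + log (v ^ 2))) = fun v => -2 * v - 4 * (v * log v) := by
      funext v; rw [log_pow]; push_cast; ring
    rw [this]
    exact ((continuous_const.mul continuous_id).sub
      (continuous_const.mul continuous_mul_log)).continuousAt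
  · exact hne u hu

section

variable {ι : Type*} [Fintype ι]

lemma sum_mul_one_add_log_sq_le (hι : 1 ≤ log (Fintype.card ι))
    (x : ι → ℝ) (hx : ∀ i, 0 ≤ x i) (hs : ∑ i, x i ≤ 1) :
    ∑ i, x i * (1 + log (x i)) ^ 2 ≤ 2 * log (Fintype.card ι) ^ 2 := by
  have hcard : (0 : ℝ) < Fintype.card ι := by
    rcases (Nat.cast_nonneg (α := ℝ) (Fintype.card ι)).eq_or_lt with h | h
    · rw [← h, log_zero] at hι; norm_num at hι
    · exact h
  set L := log (Fintype.card ι)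
  have hx1 : ∀ i, x i ≤ 1 := fun i =>
    (single_le_sum (fun j _ => hx j) (mem_univ i)).trans hs
  calc ∑ i, x i * (1 + log (x i)) ^ 2 ≤ ∑ i, L ^ 2 * (x i + exp (-L)) :=
        sum_le_sum fun i _ => mul_one_add_log_sq_le hι (hx i) (hx1 i)
    _ = L ^ 2 * (∑ i, x i + Fintype.card ι * exp (-L)) := by
        rw [← mul_sum, sum_add_distrib, sum_const, card_univ, nsmul_eq_mul]
    _ = L ^ 2 * (∑ i, x i + 1) := by
        rw [exp_neg, exp_log hcard, mul_inv_cancel₀ hcard.ne']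
    _ ≤ 2 * L ^ 2 := by nlinarith [sq_nonneg L]

lemma sum_sq_deriv_negMulLog_sq_le (hι : 1 ≤ log (Fintype.card ι)) {w : EuclideanSpace ℝ ι}
    (hw : ‖w‖ ≤ 1) :
    ∑ i, (-2 * w i * (1 + log (w i ^ 2))) ^ 2 ≤ (√8 * log (Fintype.card ι)) ^ 2 := by
  have hsum : ∑ i, w i ^ 2 ≤ 1 := by
    simpa [EuclideanSpace.norm_sq_eq] using pow_le_one₀ (norm_nonneg w) hw (n := 2)
  calc ∑ i, (-2 * w i * (1 + log (w i ^ 2))) ^ 2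
        = 4 * ∑ i, w i ^ 2 * (1 + log (w i ^ 2)) ^ 2 := by
          rw [mul_sum]; exact sum_congr rfl fun i _ => by ring
    _ ≤ 4 * (2 * log (Fintype.card ι) ^ 2) := by
          gcongr
          exact sum_mul_one_add_log_sq_le hι _ (fun i => sq_nonneg _) hsum
    _ = (√8 * log (Fintype.card ι)) ^ 2 := by
          rw [mul_pow, sq_sqrt (by norm_num)]; ring

theorem abs_sum_negMulLog_sq_sub_le (hι : 1 ≤ log (Fintype.card ι)) {u v : EuclideanSpace ℝ ι}
    (hu : ‖u‖ ≤ 1) (hv : ‖v‖ ≤ 1) :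
    |∑ i, negMulLog (u i ^ 2) - ∑ i, negMulLog (v i ^ 2)|
      ≤ √8 * log (Fintype.card ι) * ‖u - v‖ := by
  set w : ℝ → EuclideanSpace ℝ ι := fun t => v + t • (u - v)
  have hw : ∀ t i, w t i = v i + t * (u i - v i) := fun t i => by simp [w]
  set f : ℝ → ℝ := fun t => ∑ i, negMulLog (w t i ^ 2)
  have hderiv : ∀ t, HasDerivAt f (∑ i, -2 * w t i * (1 + log (w t i ^ 2)) * (u i - v i)) t := by
    intro t
    simp only [f, hw]
    refine HasDerivAt.fun_sum fun i _ => (hasDerivAt_negMulLog_sq _).comp t ?_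
    simpa using ((hasDerivAt_id t).mul_const (u i - v i)).const_add (v i)
  have hball : ∀ t ∈ Set.Icc (0 : ℝ) 1, ‖w t‖ ≤ 1 := fun t ht => by
    simpa using (convex_closedBall (0 : EuclideanSpace ℝ ι) 1).add_smul_sub_mem
      (by simpa using hv) (by simpa using hu) ht
  have hdist : ∑ i, (u i - v i) ^ 2 = ‖u - v‖ ^ 2 := by
    simp [EuclideanSpace.norm_sq_eq]
  have hbound := norm_image_sub_le_of_norm_deriv_le_segment_01' (f := f)
    (C := √8 * log (Fintype.card ι) * ‖u - v‖)
    (fun t _ => (hderiv t).hasDerivWithinAt) fun t ht => by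
      rw [Real.norm_eq_abs]
      refine abs_le_of_sq_le_sq ?_ (by positivity)
      calc _ ≤ (∑ i, (-2 * w t i * (1 + log (w t i ^ 2))) ^ 2) * ∑ i, (u i - v i) ^ 2 :=
            sum_mul_sq_le_sq_mul_sq _ _ _
        _ ≤ (√8 * log (Fintype.card ι)) ^ 2 * ‖u - v‖ ^ 2 := by
            rw [hdist]
            gcongr
            exact sum_sq_deriv_negMulLog_sq_le hι (hball t (Set.Ico_subset_Icc_self ht))
        _ = _ := by ring
  simpa [f, w] using hbound

end

section Blocks

variable {𝕜 ι κ : Type*} [RCLike 𝕜]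

def block (φ : EuclideanSpace 𝕜 (ι × κ)) (i : ι) : EuclideanSpace 𝕜 κ :=
  WithLp.toLp 2 fun k => φ (i, k)

lemma block_sub (φ ψ : EuclideanSpace 𝕜 (ι × κ)) (i : ι) :
    block (φ - ψ) i = block φ i - block ψ i := rfl

variable [Fintype ι] [Fintype κ]

def blockNorms (φ : EuclideanSpace 𝕜 (ι × κ)) : EuclideanSpace ℝ ι :=
  WithLp.toLp 2 fun i => ‖block φ i‖

lemma sum_norm_block_sq (φ : EuclideanSpace 𝕜 (ι × κ)) : ∑ i, ‖block φ i‖ ^ 2 = ‖φ‖ ^ 2 := by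
  simp [EuclideanSpace.norm_sq_eq, block, Fintype.sum_prod_type]

lemma norm_blockNorms (φ : EuclideanSpace 𝕜 (ι × κ)) : ‖blockNorms φ‖ = ‖φ‖ := by
  rw [← sq_eq_sq₀ (norm_nonneg _) (norm_nonneg _), EuclideanSpace.norm_sq_eq,
    ← sum_norm_block_sq]
  simp [blockNorms]

lemma norm_blockNorms_sub_le (φ ψ : EuclideanSpace 𝕜 (ι × κ)) :
    ‖blockNorms φ - blockNorms ψ‖ ≤ ‖φ - ψ‖ := by
  rw [← sq_le_sq₀ (norm_nonneg _) (norm_nonneg _), EuclideanSpace.norm_sq_eq,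
    ← sum_norm_block_sq]
  gcongr with i
  simpa [blockNorms, block_sub] using abs_norm_sub_norm_le (block φ i) (block ψ i)

end Blocks

lemma ptraceB_pureDM_apply_re {dA dB : ℕ} (φ : EuclideanSpace ℂ (Fin dA × Fin dB)) (j : Fin dA) :
    (QIT.ptraceB (QIT.pureDM φ) j j).re = ‖block φ j‖ ^ 2 := by
  simp only [QIT.ptraceB, QIT.pureDM, Matrix.of_apply, Complex.mul_conj, Complex.re_sum,
    Complex.ofReal_re, Complex.normSq_eq_norm_sq, EuclideanSpace.norm_sq_eq, block]

lemma measuredEntropy_eq {dA dB : ℕ} (φ : EuclideanSpace ℂ (Fin dA × Fin dB)) :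
    measuredEntropy dA dB φ = (∑ j, negMulLog (blockNorms φ j ^ 2)) / log 2 := by
  simp only [measuredEntropy, ptraceB_pureDM_apply_re, sum_div, negMulLog, logb, blockNorms]
  exact sum_congr rfl fun j _ => by ring

theorem measured_entropy_lipschitz (dA dB : ℕ) (hA : 3 ≤ dA) :
    ∀ φ ψ : EuclideanSpace ℂ (Fin dA × Fin dB), ‖φ‖ = 1 → ‖ψ‖ = 1 →
      |measuredEntropy dA dB φ - measuredEntropy dA dB ψ|
        ≤ Real.sqrt 8 * Real.logb 2 dA * ‖φ - ψ‖ := by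
  intro φ ψ hφ hψ
  have hlog : 1 ≤ log (Fintype.card (Fin dA)) := by
    have h3 : (3 : ℝ) ≤ dA := by exact_mod_cast hA
    rw [Fintype.card_fin, ← log_exp 1]
    exact log_le_log (exp_pos 1) (by linarith [exp_one_lt_d9])
  have hlip := abs_sum_negMulLog_sq_sub_le hlog (u := blockNorms φ) (v := blockNorms ψ)
    (by rw [norm_blockNorms, hφ]) (by rw [norm_blockNorms, hψ])
  rw [Fintype.card_fin] at hlip
  have hlog2 : 0 < log 2 := log_pos one_lt_two
  rw [measuredEntropy_eq, measuredEntropy_eq, ← sub_div, abs_div, abs_of_pos hlog2,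
    div_le_iff₀ hlog2]
  calc _ ≤ √8 * log dA * ‖blockNorms φ - blockNorms ψ‖ := hlip
    _ ≤ √8 * log dA * ‖φ - ψ‖ := by gcongr; exact norm_blockNorms_sub_le φ ψ
    _ = √8 * logb 2 dA * ‖φ - ψ‖ * log 2 := by rw [logb]; field_simp
end
end

section
/- The function f(φ) = √(Tr φ_A²), defined on unit vectors φ ∈ C^{d_A} ⊗ C^{d_B} with φ_A = Tr_B |φ⟩⟨φ|, is Lipschitz with constant at most 2 with respect to the Euclidean norm. -/
open scoped BigOperators ComplexOrder
open Matrix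

noncomputable section

/-- `f(φ) = √(Tr φ_A²)`, the square root of the purity of the reduced state. -/
noncomputable def sqrtPurity (dA dB : ℕ) (φ : EuclideanSpace ℂ (Fin dA × Fin dB)) : ℝ :=
  Real.sqrt (((QIT.ptraceB (QIT.pureDM φ) * QIT.ptraceB (QIT.pureDM φ)).trace).re)

/-! Reshape `φ` into the `dA × dB` coefficient matrix `M`, an isometry for the Frobenius norm.
Then `φ_A = M Mᴴ`, so `f(φ) = ‖M Mᴴ‖`, and `M Mᴴ - N Nᴴ = M (M - N)ᴴ + (M - N) Nᴴ` together with
submultiplicativity of the Frobenius norm gives `‖M Mᴴ - N Nᴴ‖ ≤ (‖M‖ + ‖N‖) ‖M - N‖ = 2 ‖φ - ψ‖`. -/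

open scoped Matrix.Norms.Frobenius

namespace EuclideanSpace

variable {𝕜 : Type*} [RCLike 𝕜] {m n : Type*} [Fintype m] [Fintype n]

def toMatrix : EuclideanSpace 𝕜 (m × n) ≃ₗᵢ[𝕜] Matrix m n 𝕜 where
  toLinearEquiv :=
    (WithLp.linearEquiv 2 𝕜 _).trans ((LinearEquiv.curry 𝕜 𝕜 m n).trans (Matrix.ofLinearEquiv 𝕜))
  norm_map' φ := by
    simp [Matrix.frobenius_norm_def, EuclideanSpace.norm_eq, Real.sqrt_eq_rpow,
      Fintype.sum_prod_type]

@[simp]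
lemma toMatrix_apply (φ : EuclideanSpace 𝕜 (m × n)) (i : m) (j : n) :
    toMatrix φ i j = φ (i, j) := rfl

end EuclideanSpace

namespace Matrix

variable {𝕜 : Type*} [RCLike 𝕜] {m n : Type*} [Fintype m] [Fintype n]

lemma frobenius_norm_sq_eq_re_trace_conjTranspose_mul_self (A : Matrix m n 𝕜) :
    ‖A‖ ^ 2 = RCLike.re (Aᴴ * A).trace := by
  rw [frobenius_norm_def, ← Real.rpow_natCast, ← Real.rpow_mul (by positivity)]
  simp [trace, mul_apply, RCLike.conj_mul, Finset.sum_comm (γ := m)]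

lemma frobenius_norm_eq_sqrt_re_trace_mul_self {A : Matrix n n 𝕜} (hA : A.IsHermitian) :
    ‖A‖ = √(RCLike.re (A * A).trace) := by
  rw [← Real.sqrt_sq (norm_nonneg A), frobenius_norm_sq_eq_re_trace_conjTranspose_mul_self, hA.eq]

lemma frobenius_norm_mul_conjTranspose_sub_le (M N : Matrix m n 𝕜) :
    ‖M * Mᴴ - N * Nᴴ‖ ≤ (‖M‖ + ‖N‖) * ‖M - N‖ :=
  calc ‖M * Mᴴ - N * Nᴴ‖ = ‖M * (M - N)ᴴ + (M - N) * Nᴴ‖ := by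
        rw [conjTranspose_sub, Matrix.mul_sub, Matrix.sub_mul]; abel_nf
    _ ≤ ‖M‖ * ‖(M - N)ᴴ‖ + ‖M - N‖ * ‖Nᴴ‖ :=
        (norm_add_le _ _).trans (add_le_add (frobenius_norm_mul _ _) (frobenius_norm_mul _ _))
    _ = (‖M‖ + ‖N‖) * ‖M - N‖ := by simp only [frobenius_norm_conjTranspose]; ring

end Matrix

open EuclideanSpace in
lemma QIT.ptraceB_pureDM {dA dB : ℕ} (φ : EuclideanSpace ℂ (Fin dA × Fin dB)) :
    QIT.ptraceB (QIT.pureDM φ) = toMatrix φ * (toMatrix φ)ᴴ := by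
  ext a a'
  simp [QIT.ptraceB, QIT.pureDM, Matrix.mul_apply]

lemma sqrtPurity_eq_norm {dA dB : ℕ} (φ : EuclideanSpace ℂ (Fin dA × Fin dB)) :
    sqrtPurity dA dB φ = ‖EuclideanSpace.toMatrix φ * (EuclideanSpace.toMatrix φ)ᴴ‖ := by
  rw [sqrtPurity, QIT.ptraceB_pureDM,
    Matrix.frobenius_norm_eq_sqrt_re_trace_mul_self (Matrix.isHermitian_mul_conjTranspose_self _)]
  rfl

theorem sqrt_purity_lipschitz (dA dB : ℕ) :
    ∀ φ ψ : EuclideanSpace ℂ (Fin dA × Fin dB), ‖φ‖ = 1 → ‖ψ‖ = 1 →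
      |sqrtPurity dA dB φ - sqrtPurity dA dB ψ| ≤ 2 * ‖φ - ψ‖ := by
  intro φ ψ hφ hψ
  set M := EuclideanSpace.toMatrix φ
  set N := EuclideanSpace.toMatrix ψ
  calc |sqrtPurity dA dB φ - sqrtPurity dA dB ψ| = |‖M * Mᴴ‖ - ‖N * Nᴴ‖| := by
        rw [sqrtPurity_eq_norm, sqrtPurity_eq_norm]
    _ ≤ ‖M * Mᴴ - N * Nᴴ‖ := abs_norm_sub_norm_le _ _
    _ ≤ (‖M‖ + ‖N‖) * ‖M - N‖ := Matrix.frobenius_norm_mul_conjTranspose_sub_le M N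
    _ = 2 * ‖φ - ψ‖ := by
        simp only [M, N, ← map_sub, LinearIsometryEquiv.norm_map, hφ, hψ]; norm_num
end
end

section
/- Let p = (p₁,…,p_d) be a probability distribution on d ≥ 3 outcomes. Then 1 + Σ_j p_j (ln p_j)² ≤ 1 + (ln d)², and consequently (4/(ln 2)²)·(1 + Σ_j p_j (ln p_j)²) ≤ 8 (log₂ d)². -/
open scoped BigOperators ComplexOrder
open Matrix

noncomputable section

open Real Set

/-! The function `f x = x (log x)²` is concave on `[0, 1/e]` and convex on `[1/e, ∞)`. Since
`3/e > 1`, at most two entries of a probability vector lie above `1/e`, and by convexity two such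
entries `a, b` can be replaced by `1/e` and `a + b - 1/e` without decreasing `∑ f`. So we may
assume that every entry but the largest one, `x ≥ 1/n`, lies in the concave region, where Jensen
bounds `∑ f` by `f x + (n - 1) f y` with `y = (1 - x) / (n - 1)`. The derivative of this in `x` is
`(log x - log y) (log (x y) + 2)`, which is `≤ 0` because `y ≤ x` and `x y ≤ 1/8 < e⁻²` for
`n ≥ 3`; so the bound is largest at the uniform distribution `x = y = 1/n`, where it is
`(log n)²`. -/

theorem ConcaveOn.sum_map_le_card_mul_map_average {ι : Type*} {s : Set ℝ} {f : ℝ → ℝ}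
    (hf : ConcaveOn ℝ s f) {t : Finset ι} (ht : t.Nonempty) {p : ι → ℝ}
    (hp : ∀ i ∈ t, p i ∈ s) :
    ∑ i ∈ t, f (p i) ≤ t.card * f ((∑ i ∈ t, p i) / t.card) := by
  have hcard : (0 : ℝ) < t.card := by exact_mod_cast ht.card_pos
  have h := hf.le_map_sum (t := t) (w := fun _ => (t.card : ℝ)⁻¹) (p := p)
    (fun _ _ => by positivity) (by simp [hcard.ne']) hp
  simp only [smul_eq_mul, ← Finset.mul_sum] at h
  rwa [div_eq_inv_mul, ← inv_mul_le_iff₀ hcard]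

theorem ConvexOn.map_add_map_le_of_add_eq {s : Set ℝ} {f : ℝ → ℝ} (hf : ConvexOn ℝ s f)
    {a b x y : ℝ} (ha : a ∈ s) (hb : b ∈ s) (hx : x ∈ Icc a b) (hxy : x + y = a + b) :
    f x + f y ≤ f a + f b := by
  rcases (hx.1.trans hx.2).eq_or_lt with rfl | hab
  · obtain rfl : x = a := le_antisymm hx.2 hx.1
    obtain rfl : y = x := by linarith
    rfl
  set t := (b - x) / (b - a)
  have ht0 : 0 ≤ t := div_nonneg (by linarith [hx.2]) (by linarith)
  have ht1 : 0 ≤ 1 - t := by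
    rw [sub_nonneg, div_le_one (by linarith)]
    linarith [hx.1]
  have hx_eq : t * a + (1 - t) * b = x := by
    simp only [t]
    field_simp
    ring
  have hy_eq : (1 - t) * a + t * b = y := by linarith
  have hfx := hf.2 ha hb ht0 ht1 (by ring)
  have hfy := hf.2 ha hb ht1 ht0 (by ring)
  simp only [smul_eq_mul, hx_eq, hy_eq] at hfx hfy
  linarith

theorem Fintype.sum_sub_pair_eq_of_forall_ne {ι M : Type*} [Fintype ι] [DecidableEq ι]
    [AddCommGroup M] {g h : ι → M} {i j : ι} (hij : i ≠ j)
    (hgh : ∀ l, l ≠ i → l ≠ j → g l = h l) :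
    ∑ l, g l - (g i + g j) = ∑ l, h l - (h i + h j) := by
  rw [← Finset.sum_pair hij, ← Finset.sum_pair hij,
    ← Finset.sum_sdiff_eq_sub (Finset.subset_univ _),
    ← Finset.sum_sdiff_eq_sub (Finset.subset_univ _)]
  refine Finset.sum_congr rfl fun l hl => hgh l ?_ ?_ <;> simp_all

def mulLogSq (x : ℝ) : ℝ := x * log x ^ 2

theorem hasDerivAt_mulLogSq {x : ℝ} (hx : x ≠ 0) :
    HasDerivAt mulLogSq ((log x + 1) ^ 2 - 1) x := by
  refine ((hasDerivAt_id' x).fun_mul ((hasDerivAt_log hx).fun_pow 2)).congr_deriv ?_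
  field_simp
  ring

theorem continuousOn_mulLogSq : ContinuousOn mulLogSq (Ici 0) := by
  have hc : Continuous fun x => 4 * (√x * log √x) ^ 2 :=
    continuous_const.mul ((continuous_mul_log.comp continuous_sqrt).pow 2)
  refine hc.continuousOn.congr fun x (hx : 0 ≤ x) => ?_
  simp only [mulLogSq, mul_pow, log_sqrt hx, sq_sqrt hx]
  ring

theorem concaveOn_mulLogSq : ConcaveOn ℝ (Icc 0 (exp (-1))) mulLogSq := by
  refine AntitoneOn.concaveOn_of_deriv (convex_Icc _ _)
    (continuousOn_mulLogSq.mono Icc_subset_Ici_self) ?_ ?_ <;> rw [interior_Icc]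
  · exact fun x hx => (hasDerivAt_mulLogSq hx.1.ne').differentiableAt.differentiableWithinAt
  · intro a ha b hb hab
    rw [(hasDerivAt_mulLogSq ha.1.ne').deriv, (hasDerivAt_mulLogSq hb.1.ne').deriv]
    have hlog : log a ≤ log b := log_le_log ha.1 hab
    have hb1 : log b ≤ -1 := (log_le_iff_le_exp hb.1).2 hb.2.le
    nlinarith

theorem convexOn_mulLogSq : ConvexOn ℝ (Ici (exp (-1))) mulLogSq := by
  have hpos {x : ℝ} (hx : exp (-1) ≤ x) : 0 < x := (exp_pos _).trans_le hx
  refine MonotoneOn.convexOn_of_deriv (convex_Ici _)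
    (continuousOn_mulLogSq.mono fun x hx => (hpos hx).le) ?_ ?_ <;> rw [interior_Ici]
  · exact fun x (hx : exp (-1) < x) =>
      (hasDerivAt_mulLogSq (hpos hx.le).ne').differentiableAt.differentiableWithinAt
  · intro a (ha : exp (-1) < a) b _ hab
    have ha0 : 0 < a := hpos ha.le
    rw [(hasDerivAt_mulLogSq ha0.ne').deriv, (hasDerivAt_mulLogSq (ha0.trans_le hab).ne').deriv]
    have hlog : log a ≤ log b := log_le_log ha0 hab
    have ha1 : -1 ≤ log a := (le_log_iff_exp_le ha0).2 ha.le
    nlinarith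

def spikeSum (n x : ℝ) : ℝ := mulLogSq x + (n - 1) * mulLogSq ((1 - x) / (n - 1))

theorem antitoneOn_spikeSum {n : ℝ} (hn : 3 ≤ n) : AntitoneOn (spikeSum n) (Icc n⁻¹ 1) := by
  have hn1 : 0 < n - 1 := by linarith
  have hinv : 0 < n⁻¹ := by positivity
  refine antitoneOn_of_hasDerivWithinAt_nonpos (convex_Icc _ _)
    (f' := fun x => (log x + 1) ^ 2 - (log ((1 - x) / (n - 1)) + 1) ^ 2) ?_ ?_ ?_
  · refine continuousOn_mulLogSq.mono (fun x hx => hinv.le.trans hx.1) |>.add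
      (continuousOn_const.mul (continuousOn_mulLogSq.comp (by fun_prop) fun x hx => ?_))
    exact div_nonneg (sub_nonneg.2 hx.2) hn1.le
  · rw [interior_Icc]
    intro x hx
    have hy : 0 < (1 - x) / (n - 1) := div_pos (sub_pos.2 hx.2) hn1
    have hinner : HasDerivAt (fun x => (1 - x) / (n - 1)) (-1 / (n - 1)) x :=
      ((hasDerivAt_id' x).const_sub 1).div_const _
    refine HasDerivAt.hasDerivWithinAt <| ((hasDerivAt_mulLogSq (hinv.trans hx.1).ne').add
      (((hasDerivAt_mulLogSq hy.ne').comp x hinner).const_mul (n - 1))).congr_deriv ?_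
    field_simp
    ring
  · rw [interior_Icc]
    intro x ⟨hx0, hx1⟩
    set y := (1 - x) / (n - 1)
    have hxpos : 0 < x := hinv.trans hx0
    have hy : 0 < y := div_pos (sub_pos.2 hx1) hn1
    have hyx : y ≤ x := by
      rw [div_le_iff₀ hn1]
      rw [inv_lt_iff_one_lt_mul₀ (by linarith)] at hx0
      linarith
    have hxy : log x + log y ≤ -2 := by
      have h8 : x * y ≤ 2⁻¹ ^ 3 := by
        rw [show x * y = x * (1 - x) / (n - 1) by ring, div_le_iff₀ hn1]
        nlinarith [sq_nonneg (x - 1 / 2)]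
      have := log_le_log (mul_pos hxpos hy) h8
      rw [log_mul hxpos.ne' hy.ne', log_pow, log_inv, Nat.cast_ofNat] at this
      linarith [log_two_gt_d9]
    have hlog : log y ≤ log x := log_le_log hy hyx
    nlinarith

theorem spikeSum_inv {n : ℝ} (hn : 1 < n) : spikeSum n n⁻¹ = log n ^ 2 := by
  have hn1 : n - 1 ≠ 0 := by linarith
  have h : (1 - n⁻¹) / (n - 1) = n⁻¹ := by
    field_simp
  rw [spikeSum, h, mulLogSq, log_inv]
  field_simp
  ring

theorem sum_mulLogSq_le_of_forall_ne_le {ι : Type*} [Fintype ι] [DecidableEq ι]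
    (hcard : 3 ≤ Fintype.card ι) {p : ι → ℝ} (hp : ∀ j, 0 ≤ p j) (hsum : ∑ j, p j = 1) {i : ι}
    (hi : (Fintype.card ι : ℝ)⁻¹ ≤ p i) (hsmall : ∀ j ≠ i, p j ≤ exp (-1)) :
    ∑ j, mulLogSq (p j) ≤ log (Fintype.card ι) ^ 2 := by
  have hn : (3 : ℝ) ≤ Fintype.card ι := by exact_mod_cast hcard
  set n : ℝ := (Fintype.card ι : ℝ)
  set t := Finset.univ.erase i
  have ht : t.Nonempty := by
    rw [← Finset.card_pos, Finset.card_erase_of_mem (Finset.mem_univ i), Finset.card_univ]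
    omega
  have htcard : (t.card : ℝ) = n - 1 := by
    rw [Finset.card_erase_of_mem (Finset.mem_univ i), Finset.card_univ,
      Nat.cast_sub (by omega), Nat.cast_one]
  have htsum : ∑ j ∈ t, p j = 1 - p i := by
    rw [← hsum, ← Finset.add_sum_erase _ _ (Finset.mem_univ i)]
    ring
  have hpi : p i ≤ 1 := hsum ▸ Finset.single_le_sum (fun j _ => hp j) (Finset.mem_univ i)
  have hjensen := concaveOn_mulLogSq.sum_map_le_card_mul_map_average ht
    fun j hj => ⟨hp j, hsmall j (Finset.ne_of_mem_erase hj)⟩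
  rw [htcard, htsum] at hjensen
  calc ∑ j, mulLogSq (p j) = mulLogSq (p i) + ∑ j ∈ t, mulLogSq (p j) :=
        (Finset.add_sum_erase _ _ (Finset.mem_univ i)).symm
    _ ≤ spikeSum n (p i) := add_le_add le_rfl hjensen
    _ ≤ spikeSum n n⁻¹ :=
        antitoneOn_spikeSum hn ⟨le_rfl, inv_le_one_of_one_le₀ (by linarith)⟩ ⟨hi, hpi⟩ hi
    _ = log n ^ 2 := spikeSum_inv (by linarith)

theorem exists_single_large_sum_mulLogSq_ge {ι : Type*} [Fintype ι] [DecidableEq ι]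
    {p : ι → ℝ} (hp : ∀ j, 0 ≤ p j) (hsum : ∑ j, p j = 1) {i j : ι} (hij : i ≠ j)
    (hpj : p j ≤ p i) (hj : exp (-1) < p j) :
    ∃ q : ι → ℝ, (∀ l, 0 ≤ q l) ∧ ∑ l, q l = 1 ∧ p i ≤ q i ∧ (∀ l ≠ i, q l ≤ exp (-1)) ∧
      ∑ l, mulLogSq (p l) ≤ ∑ l, mulLogSq (q l) := by
  -- Three entries above `1/e` would sum to more than `1`.
  have hrest : ∀ l, l ≠ i → l ≠ j → p l ≤ exp (-1) := by
    intro l hli hlj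
    by_contra! hl
    have h3 : p i + (p j + p l) ≤ 1 := by
      rw [← hsum, ← Finset.sum_pair hlj.symm, ← Finset.sum_insert (by simp [hij, hli.symm])]
      exact Finset.sum_le_univ_sum_of_nonneg hp
    linarith [exp_neg_one_gt_d9]
  set q := Function.update (Function.update p j (exp (-1))) i (p i + p j - exp (-1))
  have hqi : q i = p i + p j - exp (-1) := Function.update_self ..
  have hqj : q j = exp (-1) := by simp [q, hij.symm]
  have hqp : ∀ l, l ≠ i → l ≠ j → q l = p l := by
    intro l hli hlj
    simp [q, hli, hlj]
  have hpush : mulLogSq (p j) + mulLogSq (p i) ≤ mulLogSq (q j) + mulLogSq (q i) := by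
    rw [hqi, hqj]
    exact convexOn_mulLogSq.map_add_map_le_of_add_eq self_mem_Ici
      (by simp only [mem_Ici]; linarith) ⟨hj.le, by linarith⟩ (by ring)
  refine ⟨q, fun l => ?_, ?_, by linarith, fun l hli => ?_, ?_⟩
  · rcases eq_or_ne l i with rfl | hli
    · linarith [hp l]
    rcases eq_or_ne l j with rfl | hlj
    · exact hqj ▸ (exp_pos _).le
    · exact hqp l hli hlj ▸ hp l
  · linarith [Fintype.sum_sub_pair_eq_of_forall_ne hij hqp]
  · rcases eq_or_ne l j with rfl | hlj
    · exact hqj.le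
    · exact hqp l hli hlj ▸ hrest l hli hlj
  · linarith [Fintype.sum_sub_pair_eq_of_forall_ne (g := fun l => mulLogSq (q l))
      (h := fun l => mulLogSq (p l)) hij fun l hli hlj => by rw [hqp l hli hlj]]

theorem sum_mulLogSq_le_log_card_sq {ι : Type*} [Fintype ι] (hcard : 3 ≤ Fintype.card ι)
    {p : ι → ℝ} (hp : ∀ j, 0 ≤ p j) (hsum : ∑ j, p j = 1) :
    ∑ j, mulLogSq (p j) ≤ log (Fintype.card ι) ^ 2 := by
  classical
  have hne : (Finset.univ : Finset ι).Nonempty := by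
    rw [Finset.univ_nonempty_iff, ← Fintype.card_pos_iff]
    omega
  obtain ⟨i, -, hmax⟩ := Finset.exists_max_image Finset.univ p hne
  have hi : (Fintype.card ι : ℝ)⁻¹ ≤ p i := by
    have : ∑ j, p j ≤ Fintype.card ι * p i := by
      simpa using Finset.sum_le_sum fun j hj => hmax j hj
    rw [inv_le_iff_one_le_mul₀ (by positivity)]
    linarith
  by_cases hsmall : ∀ j ≠ i, p j ≤ exp (-1)
  · exact sum_mulLogSq_le_of_forall_ne_le hcard hp hsum hi hsmall
  push Not at hsmall
  obtain ⟨j, hji, hj⟩ := hsmall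
  obtain ⟨q, hq, hqsum, hpq, hqsmall, hpq_sum⟩ :=
    exists_single_large_sum_mulLogSq_ge hp hsum hji.symm (hmax j (Finset.mem_univ j)) hj
  exact hpq_sum.trans (sum_mulLogSq_le_of_forall_ne_le hcard hq hqsum (hi.trans hpq) hqsmall)

theorem entropy_gradient_bound (d : ℕ) (hd : 3 ≤ d) (p : Fin d → ℝ)
    (hp : ∀ j, 0 ≤ p j) (hsum : ∑ j, p j = 1) :
    1 + ∑ j, p j * (Real.log (p j)) ^ 2 ≤ 1 + (Real.log d) ^ 2 ∧
    (4 / (Real.log 2) ^ 2) * (1 + ∑ j, p j * (Real.log (p j)) ^ 2)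
      ≤ 8 * (Real.logb 2 d) ^ 2 := by
  have hS : ∑ j, p j * log (p j) ^ 2 ≤ log d ^ 2 := by
    simpa [mulLogSq] using sum_mulLogSq_le_log_card_sq (by simpa using hd) hp hsum
  have hlogd : 1 ≤ log d :=
    calc 1 ≤ log 3 := by linarith [log_three_gt_d9]
      _ ≤ log d := log_le_log (by norm_num) (by exact_mod_cast hd)
  have hlog2 : 0 < log 2 ^ 2 := by positivity
  refine ⟨by linarith, ?_⟩
  rw [← log_div_log, div_pow, div_mul_eq_mul_div, mul_div_assoc',
    div_le_div_iff_of_pos_right hlog2]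
  nlinarith

end
end

section
/- Let ρ be a density matrix on A ⊗ B and suppose that for every rank-one projector P on A and every rank-one projector Q on B, |Tr(ρ (P ⊗ Q)) − 1/(d_A d_B)| ≤ ε/(d_A d_B) with ε ≤ 1/3. Then for every rank-one projector P on A, the normalized conditional state σ = Tr_A(ρ(P⊗I))/Tr(ρ(P⊗I)) satisfies (1−3ε)·I/d_B ≤ σ ≤ (1+3ε)·I/d_B. -/
open scoped BigOperators ComplexOrder
open Matrix

noncomputable section

/-!
Fix `P` and put `M = Tr_A (ρ (P ⊗ 1))`. For a unit vector `ψ`, `⟪ψ, M ψ⟫ = Tr (ρ (P ⊗ |ψ⟩⟨ψ|))`,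
so the hypothesis for `Q = |ψ⟩⟨ψ|` squeezes `M` between `(1 ∓ ε) / (d_A d_B) • 1` in the Loewner
order. Taking traces, `Tr M = Tr (ρ (P ⊗ 1))` lies between `(1 ∓ ε) / d_A`, hence `M / Tr M` lies
between `(1 - ε) / (1 + ε) / d_B • 1` and `(1 + ε) / (1 - ε) / d_B • 1`, and for `0 ≤ ε ≤ 1/3`
these ratios are at least `1 - 3ε` and at most `1 + 3ε`.
-/

open scoped MatrixOrder

namespace Matrix

variable {𝕜 n : Type*} [RCLike 𝕜] [Fintype n]

lemma re_trace_mono {A B : Matrix n n 𝕜} (h : A ≤ B) :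
    RCLike.re A.trace ≤ RCLike.re B.trace := by
  have := (RCLike.nonneg_iff.mp (le_iff.mp h).trace_nonneg).1
  rwa [trace_sub, map_sub, sub_nonneg] at this

lemma re_dotProduct_mulVec_smul (M : Matrix n n 𝕜) (c : ℝ) (x : n → 𝕜) :
    RCLike.re (star ((c : 𝕜) • x) ⬝ᵥ M *ᵥ ((c : 𝕜) • x))
      = c ^ 2 * RCLike.re (star x ⬝ᵥ M *ᵥ x) := by
  simp [mulVec_smul, star_smul, dotProduct_smul, smul_dotProduct, RCLike.smul_re, sq, mul_assoc]

lemma re_star_dotProduct_self (x : EuclideanSpace 𝕜 n) :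
    RCLike.re (star x.ofLp ⬝ᵥ x.ofLp) = ‖x‖ ^ 2 := by
  rw [dotProduct_comm, ← EuclideanSpace.inner_eq_star_dotProduct, inner_self_eq_norm_sq]

lemma mul_norm_sq_le_re_dotProduct_mulVec {M : Matrix n n 𝕜} {a : ℝ}
    (h : ∀ ψ : EuclideanSpace 𝕜 n, ‖ψ‖ = 1 → a ≤ RCLike.re (star ψ.ofLp ⬝ᵥ M *ᵥ ψ.ofLp))
    (x : EuclideanSpace 𝕜 n) : a * ‖x‖ ^ 2 ≤ RCLike.re (star x.ofLp ⬝ᵥ M *ᵥ x.ofLp) := by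
  rcases eq_or_ne x 0 with rfl | hx
  · simp
  have hx' : 0 < ‖x‖ := norm_pos_iff.mpr hx
  have hψ : ‖((‖x‖⁻¹ : ℝ) : 𝕜) • x‖ = 1 := by
    rw [norm_smul, RCLike.norm_ofReal, abs_inv, abs_norm, inv_mul_cancel₀ hx'.ne']
  have := h _ hψ
  rwa [WithLp.ofLp_smul, re_dotProduct_mulVec_smul, inv_pow, ← div_eq_inv_mul,
    le_div_iff₀ (by positivity)] at this

variable [DecidableEq n]

lemma smul_one_le_of_forall_norm_eq_one {M : Matrix n n 𝕜} (hM : M.IsHermitian) {a : ℝ}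
    (h : ∀ ψ : EuclideanSpace 𝕜 n, ‖ψ‖ = 1 → a ≤ RCLike.re (star ψ.ofLp ⬝ᵥ M *ᵥ ψ.ofLp)) :
    a • (1 : Matrix n n 𝕜) ≤ M := by
  have hN : (M - a • 1).IsHermitian := hM.sub (isHermitian_one.smul (IsSelfAdjoint.all a))
  refine PosSemidef.of_dotProduct_mulVec_nonneg hN fun x =>
    RCLike.nonneg_iff.mpr ⟨?_, hN.im_star_dotProduct_mulVec_self x⟩
  have := mul_norm_sq_le_re_dotProduct_mulVec h (WithLp.toLp 2 x)
  rw [← re_star_dotProduct_self] at this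
  simpa [sub_mulVec, smul_mulVec, dotProduct_sub, dotProduct_smul, RCLike.smul_re] using this

lemma le_smul_one_of_forall_norm_eq_one {M : Matrix n n 𝕜} (hM : M.IsHermitian) {b : ℝ}
    (h : ∀ ψ : EuclideanSpace 𝕜 n, ‖ψ‖ = 1 → RCLike.re (star ψ.ofLp ⬝ᵥ M *ᵥ ψ.ofLp) ≤ b) :
    M ≤ b • (1 : Matrix n n 𝕜) := by
  have := smul_one_le_of_forall_norm_eq_one hM.neg (a := -b) fun ψ hψ => by
    simpa [neg_mulVec] using h ψ hψ
  rwa [neg_smul, neg_le_neg_iff] at this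

lemma smul_one_le_smul_one {a b : ℝ} (h : a ≤ b) : a • (1 : Matrix n n 𝕜) ≤ b • 1 :=
  smul_le_smul_of_nonneg_right h PosSemidef.one.nonneg

lemma one_div_re_trace_smul_mem_Icc [Nonempty n] {M : Matrix n n 𝕜} {α β : ℝ} (hα : 0 < α)
    (hlo : α • 1 ≤ M) (hhi : M ≤ β • 1) :
    (1 / RCLike.re M.trace) • M ∈
      Set.Icc ((α / β / Fintype.card n) • 1) ((β / α / Fintype.card n) • 1) := by
  have hre (c : ℝ) : RCLike.re (c • (1 : Matrix n n 𝕜)).trace = c * Fintype.card n := by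
    simp [RCLike.smul_re]
  have htlo := (hre α).symm.trans_le (re_trace_mono hlo)
  have hthi := (re_trace_mono hhi).trans_eq (hre β)
  set t := RCLike.re M.trace
  have hd : (0 : ℝ) < Fintype.card n := by exact_mod_cast Fintype.card_pos
  have ht : 0 < t := (by positivity : 0 < α * Fintype.card n).trans_le htlo
  have hβ : 0 < β := pos_of_mul_pos_left (ht.trans_le hthi) hd.le
  rw [div_div, div_div]
  constructor
  · calc (α / (β * Fintype.card n)) • (1 : Matrix n n 𝕜) ≤ (1 / t) • (α • 1) := by
          rw [smul_smul, one_div_mul_eq_div]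
          exact smul_one_le_smul_one (div_le_div_of_nonneg_left hα.le ht hthi)
      _ ≤ (1 / t) • M := smul_le_smul_of_nonneg_left hlo (by positivity)
  · calc (1 / t) • M ≤ (1 / t) • (β • 1) := smul_le_smul_of_nonneg_left hhi (by positivity)
      _ ≤ (β / (α * Fintype.card n)) • (1 : Matrix n n 𝕜) := by
          rw [smul_smul, one_div_mul_eq_div]
          exact smul_one_le_smul_one (div_le_div_of_nonneg_left hβ.le (by positivity) htlo)

end Matrix

namespace QIT

section Purification

variable {n m : Type*} [Fintype n] [Fintype m] [DecidableEq m]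

lemma projector_mul_conjTranspose {A : Matrix n m ℂ} (hA : Aᴴ * A = 1) : Projector (A * Aᴴ) :=
  ⟨isHermitian_mul_conjTranspose_self A,
    by rw [Matrix.mul_assoc, ← Matrix.mul_assoc Aᴴ, hA, Matrix.one_mul]⟩

lemma rank_mul_conjTranspose {A : Matrix n m ℂ} (hA : Aᴴ * A = 1) :
    (A * Aᴴ).rank = Fintype.card m := by
  rw [rank_self_mul_conjTranspose, ← rank_conjTranspose_mul_self, hA, rank_one]

omit [Fintype n] [DecidableEq m] in
lemma pureDM_eq_replicateCol_mul_conjTranspose (ψ : EuclideanSpace ℂ n) :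
    pureDM ψ = replicateCol Unit ψ.ofLp * (replicateCol Unit ψ.ofLp)ᴴ := by
  ext i j
  simp [pureDM, mul_apply]

lemma conjTranspose_replicateCol_mul_self {ψ : EuclideanSpace ℂ n} (hψ : ‖ψ‖ = 1) :
    (replicateCol Unit ψ.ofLp)ᴴ * replicateCol Unit ψ.ofLp = 1 := by
  ext
  rw [conjTranspose_replicateCol, replicateRow_mul_replicateCol, of_apply, one_apply_eq,
    dotProduct_comm, ← EuclideanSpace.inner_eq_star_dotProduct, inner_self_eq_norm_sq_to_K, hψ]
  simp

lemma projector_pureDM {ψ : EuclideanSpace ℂ n} (hψ : ‖ψ‖ = 1) : Projector (pureDM ψ) := by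
  rw [pureDM_eq_replicateCol_mul_conjTranspose]
  exact projector_mul_conjTranspose (conjTranspose_replicateCol_mul_self hψ)

lemma rank_pureDM {ψ : EuclideanSpace ℂ n} (hψ : ‖ψ‖ = 1) : (pureDM ψ).rank = 1 := by
  rw [pureDM_eq_replicateCol_mul_conjTranspose,
    rank_mul_conjTranspose (conjTranspose_replicateCol_mul_self hψ), Fintype.card_unit]

lemma dotProduct_mulVec_eq_trace_mul_pureDM (M : Matrix n n ℂ) (ψ : EuclideanSpace ℂ n) :
    star ψ.ofLp ⬝ᵥ M *ᵥ ψ.ofLp = (M * pureDM ψ).trace := by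
  rw [show pureDM ψ = vecMulVec ψ.ofLp (star ψ.ofLp) from rfl, mul_vecMulVec, trace_vecMulVec,
    dotProduct_comm]

end Purification

variable {dA dB : ℕ}

lemma kron_mul_kron (P P' : Matrix (Fin dA) (Fin dA) ℂ) (Q Q' : Matrix (Fin dB) (Fin dB) ℂ) :
    kron P Q * kron P' Q' = kron (P * P') (Q * Q') :=
  (mul_kronecker_mul P P' Q Q').symm

lemma conjTranspose_kron (P : Matrix (Fin dA) (Fin dA) ℂ) (Q : Matrix (Fin dB) (Fin dB) ℂ) :
    (kron P Q)ᴴ = kron Pᴴ Qᴴ :=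
  conjTranspose_kronecker P Q

lemma trace_ptraceA (X : Matrix (Fin dA × Fin dB) (Fin dA × Fin dB) ℂ) :
    (ptraceA X).trace = X.trace := by
  simp only [trace, diag, ptraceA, of_apply, Fintype.sum_prod_type]
  exact Finset.sum_comm

lemma conjTranspose_ptraceA (X : Matrix (Fin dA × Fin dB) (Fin dA × Fin dB) ℂ) :
    (ptraceA X)ᴴ = ptraceA Xᴴ := by
  ext
  simp [ptraceA, conjTranspose_apply]

lemma ptraceA_mul (X : Matrix (Fin dA × Fin dB) (Fin dA × Fin dB) ℂ)
    (Q : Matrix (Fin dB) (Fin dB) ℂ) :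
    ptraceA X * Q = ptraceA (X * kron 1 Q) := by
  ext b b'
  simp only [ptraceA, mul_apply, of_apply, Finset.sum_mul, kron, one_apply, ite_mul, one_mul,
    zero_mul, mul_ite, mul_zero, Fintype.sum_prod_type, Finset.sum_ite_irrel, Finset.sum_const_zero,
    Finset.sum_ite_eq', Finset.mem_univ, ↓reduceIte]
  exact Finset.sum_comm

lemma ptraceA_kron_one_mul (P : Matrix (Fin dA) (Fin dA) ℂ)
    (X : Matrix (Fin dA × Fin dB) (Fin dA × Fin dB) ℂ) :
    ptraceA (kron P 1 * X) = ptraceA (X * kron P 1) := by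
  ext b b'
  simp only [ptraceA, kron, one_apply, mul_ite, mul_one, mul_zero, mul_apply, of_apply, ite_mul,
    zero_mul, Fintype.sum_prod_type, Finset.sum_ite_eq, Finset.mem_univ, ↓reduceIte,
    Finset.sum_ite_eq']
  rw [Finset.sum_comm]
  exact Finset.sum_congr rfl fun _ _ => Finset.sum_congr rfl fun _ _ => mul_comm _ _

lemma isHermitian_ptraceA_mul_kron_one {ρ : Matrix (Fin dA × Fin dB) (Fin dA × Fin dB) ℂ}
    (hρ : ρ.IsHermitian) {P : Matrix (Fin dA) (Fin dA) ℂ} (hP : P.IsHermitian) :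
    (ptraceA (ρ * kron P 1)).IsHermitian := by
  rw [IsHermitian, conjTranspose_ptraceA, conjTranspose_mul, conjTranspose_kron, hρ.eq, hP.eq,
    conjTranspose_one, ptraceA_kron_one_mul]

lemma dotProduct_mulVec_ptraceA_mul_kron_one (ρ : Matrix (Fin dA × Fin dB) (Fin dA × Fin dB) ℂ)
    (P : Matrix (Fin dA) (Fin dA) ℂ) (ψ : EuclideanSpace ℂ (Fin dB)) :
    star ψ.ofLp ⬝ᵥ ptraceA (ρ * kron P 1) *ᵥ ψ.ofLp = (ρ * kron P (pureDM ψ)).trace := by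
  rw [dotProduct_mulVec_eq_trace_mul_pureDM, ptraceA_mul, trace_ptraceA, Matrix.mul_assoc,
    kron_mul_kron, Matrix.mul_one, Matrix.one_mul]

end QIT

lemma one_sub_three_mul_le_div {ε : ℝ} (hε : 0 ≤ ε) : 1 - 3 * ε ≤ (1 - ε) / (1 + ε) := by
  rw [le_div_iff₀ (by linarith)]
  nlinarith

lemma div_le_one_add_three_mul {ε : ℝ} (hε0 : 0 ≤ ε) (hε : ε ≤ 1 / 3) :
    (1 + ε) / (1 - ε) ≤ 1 + 3 * ε := by
  rw [div_le_iff₀ (by linarith)]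
  nlinarith

theorem post_measurement_near_maximally_mixed (dA dB : ℕ) (hA : 0 < dA) (hB : 0 < dB)
    (ρ : Matrix (Fin dA × Fin dB) (Fin dA × Fin dB) ℂ) (hρ : QIT.DensityMatrix ρ)
    (ε : ℝ) (hε0 : 0 ≤ ε) (hε : ε ≤ 1 / 3)
    (h : ∀ (P : Matrix (Fin dA) (Fin dA) ℂ) (Q : Matrix (Fin dB) (Fin dB) ℂ),
      QIT.Projector P → P.rank = 1 → QIT.Projector Q → Q.rank = 1 →
      |((ρ * QIT.kron P Q).trace).re - 1 / ((dA : ℝ) * dB)| ≤ ε / ((dA : ℝ) * dB)) :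
    ∀ P : Matrix (Fin dA) (Fin dA) ℂ, QIT.Projector P → P.rank = 1 →
      (((1 / ((ρ * QIT.kron P 1).trace).re : ℝ) : ℂ) • QIT.ptraceA (ρ * QIT.kron P 1)
          - (((1 - 3 * ε) / (dB : ℝ) : ℝ) : ℂ) • 1).PosSemidef ∧
      ((((1 + 3 * ε) / (dB : ℝ) : ℝ) : ℂ) • 1
          - ((1 / ((ρ * QIT.kron P 1).trace).re : ℝ) : ℂ) •
              QIT.ptraceA (ρ * QIT.kron P 1)).PosSemidef := by
  intro P hP hP1
  set D : ℝ := dA * dB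
  have hD : 0 < D := by positivity
  have hq (ψ : EuclideanSpace ℂ (Fin dB)) (hψ : ‖ψ‖ = 1) :
      |RCLike.re (star ψ.ofLp ⬝ᵥ QIT.ptraceA (ρ * QIT.kron P 1) *ᵥ ψ.ofLp) - 1 / D| ≤ ε / D := by
    rw [QIT.dotProduct_mulVec_ptraceA_mul_kron_one]
    exact h P _ hP hP1 (QIT.projector_pureDM hψ) (QIT.rank_pureDM hψ)
  have hM := QIT.isHermitian_ptraceA_mul_kron_one hρ.1.1 hP.1
  have hlo := smul_one_le_of_forall_norm_eq_one hM (a := (1 - ε) / D) fun ψ hψ => by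
    rw [sub_div]; linarith [(abs_le.mp (hq ψ hψ)).1]
  have hhi := le_smul_one_of_forall_norm_eq_one hM (b := (1 + ε) / D) fun ψ hψ => by
    rw [add_div]; linarith [(abs_le.mp (hq ψ hψ)).2]
  have : Nonempty (Fin dB) := ⟨⟨0, hB⟩⟩
  obtain ⟨hnlo, hnhi⟩ := one_div_re_trace_smul_mem_Icc (div_pos (by linarith) hD) hlo hhi
  rw [div_div_div_cancel_right₀ hD.ne', Fintype.card_fin, QIT.trace_ptraceA] at hnlo hnhi
  have hdB : (0 : ℝ) < dB := by positivity
  simp only [Complex.coe_smul]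
  constructor
  · refine (smul_one_le_smul_one ?_).trans hnlo
    exact div_le_div_of_nonneg_right (one_sub_three_mul_le_div hε0) hdB.le
  · refine hnhi.trans (smul_one_le_smul_one ?_)
    exact div_le_div_of_nonneg_right (div_le_one_add_three_mul hε0 hε) hdB.le
end
end
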